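/- Let τ_E denote the Euclidean topology on the real line ℝ, let ℚ be the set of rationals and ℙ = ℝ \ ℚ the set of irrationals. Then τ_E = τ_E(ℚ) ∩ τ_E(ℙ); the space (ℝ, τ_E(ℙ)) is separable and metrizable with Ind (ℝ, τ_E(ℙ)) ≤ 0; and the space (ℝ, τ_E(ℚ)) is hereditarily normal with Ind (ℝ, τ_E(ℚ)) ≤ 0, and is neither metrizable nor separable. -/

import Mathlib

/-- The Bing–Hanner extension `τ(M)` of a topology `τ` on `X` determined by a subset `M ⊆ X`:
its open sets are exactly the sets of the form `U ∪ K` with `U` a `τ`-open set and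
`K ⊆ X \ M`. -/
def bingHanner {X : Type*} (τ : TopologicalSpace X) (M : Set X) : TopologicalSpace X where
  IsOpen O := ∃ U K : Set X, τ.IsOpen U ∧ K ⊆ Mᶜ ∧ O = U ∪ K
  isOpen_univ := ⟨Set.univ, ∅, τ.isOpen_univ, by simp, by simp⟩
  isOpen_inter := by
    rintro s t ⟨U₁, K₁, hU₁, hK₁, rfl⟩ ⟨U₂, K₂, hU₂, hK₂, rfl⟩
    refine ⟨U₁ ∩ U₂, ((U₁ ∪ K₁) ∩ (U₂ ∪ K₂)) \ (U₁ ∩ U₂),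
      τ.isOpen_inter _ _ hU₁ hU₂, ?_, ?_⟩
    · rintro x ⟨⟨h1, h2⟩, hn⟩
      rcases h1 with h1 | h1
      · rcases h2 with h2 | h2
        · exact absurd ⟨h1, h2⟩ hn
        · exact hK₂ h2
      · exact hK₁ h1
    · have hsub : U₁ ∩ U₂ ⊆ (U₁ ∪ K₁) ∩ (U₂ ∪ K₂) :=
        fun x hx => ⟨Or.inl hx.1, Or.inl hx.2⟩
      exact (Set.union_diff_cancel hsub).symm
  isOpen_sUnion := by
    intro S hS
    choose U K hU hK hEq using hS
    refine ⟨⋃ s, ⋃ h : s ∈ S, U s h, ⋃ s, ⋃ h : s ∈ S, K s h, ?_, ?_, ?_⟩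
    · letI := τ
      exact isOpen_iUnion fun s => isOpen_iUnion fun h => hU s h
    · exact Set.iUnion_subset fun s => Set.iUnion_subset fun h => hK s h
    · ext x
      simp only [Set.mem_sUnion, Set.mem_union, Set.mem_iUnion]
      constructor
      · rintro ⟨s, hs, hx⟩
        rw [hEq s hs] at hx
        rcases hx with hx | hx
        · exact Or.inl ⟨s, hs, hx⟩
        · exact Or.inr ⟨s, hs, hx⟩
      · rintro (⟨s, hs, hx⟩ | ⟨s, hs, hx⟩)
        · exact ⟨s, hs, by rw [hEq s hs]; exact Or.inl hx⟩
        · exact ⟨s, hs, by rw [hEq s hs]; exact Or.inr hx⟩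

/-- `covDimLE t n` : the covering dimension of `(X, t)` is at most `n`, i.e. every finite
open cover admits a finite open refinement covering `X` in which any `n + 2` pairwise
distinct members have empty intersection. -/
def covDimLE {X : Type*} (t : TopologicalSpace X) (n : ℕ) : Prop :=
  ∀ C : Set (Set X), C.Finite → (∀ U ∈ C, t.IsOpen U) → ⋃₀ C = Set.univ →
    ∃ V : Set (Set X), V.Finite ∧ (∀ U ∈ V, t.IsOpen U) ∧ ⋃₀ V = Set.univ ∧
      (∀ U ∈ V, ∃ W ∈ C, U ⊆ W) ∧
      ∀ F : Finset (Set X), ↑F ⊆ V → F.card = n + 2 → ⋂₀ (F : Set (Set X)) = ∅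

/-- `IndLE0 t` : the large inductive dimension of `(Z, t)` is at most `0`, i.e. any two
disjoint closed sets are separated by a clopen set. -/
def IndLE0 {Z : Type*} (t : TopologicalSpace Z) : Prop :=
  ∀ A B : Set Z, @IsClosed Z t A → @IsClosed Z t B → Disjoint A B →
    ∃ U : Set Z, t.IsOpen U ∧ @IsClosed Z t U ∧ A ⊆ U ∧ U ∩ B = ∅

/-- `indLE0 t` : the small inductive dimension of `(Z, t)` is at most `0`, i.e. every point
has a neighborhood basis of clopen sets. -/
def indLE0 {Z : Type*} (t : TopologicalSpace Z) : Prop :=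
  ∀ (x : Z) (O : Set Z), t.IsOpen O → x ∈ O →
    ∃ U : Set Z, t.IsOpen U ∧ @IsClosed Z t U ∧ x ∈ U ∧ U ⊆ O

/-- `L` is a partition between `A` and `B` in `(X, t)`. -/
def isPartitionBetween {X : Type*} (t : TopologicalSpace X) (A B L : Set X) : Prop :=
  ∃ U V : Set X, t.IsOpen U ∧ t.IsOpen V ∧ Disjoint U V ∧ A ⊆ U ∧ B ⊆ V ∧ L = (U ∪ V)ᶜ

/-!
Points outside `M` are isolated in `τ(M)`, while at points of `M` the `τ(M)`-neighbourhoods are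
the `τ`-neighbourhoods; so a set open in both `τ(M)` and `τ(Mᶜ)` is a `τ`-neighbourhood of each
of its points. If `ℝ \ M` is dense, intervals with endpoints outside `M` are `τ(M)`-clopen, and
countably many of them form a neighbourhood basis at every point of `M`. This makes `τ(M)`
regular, and `Ind ≤ 0` follows by disjointifying a countable clopen cover of `M` by sets each
missing one of the two given closed sets. If `M` is countable, countable separating covers make
`τ(M)` completely normal; if `ℝ \ M` is countable, `τ(M)` is second countable, hence metrizable.
In `τ(ℚ)` the set `ℚ` is closed, but a `τ(ℚ)`-Gδ inside `ℚ` is a Euclidean Gδ, which `ℚ` is not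
by Baire; and the uncountably many isolated irrationals lie in every dense set.
-/

open Set Filter Topology TopologicalSpace

section IsolatedPoints

variable {Y : Type*} [TopologicalSpace Y] {M : Set Y}

theorem Dense.mem_of_isOpen_singleton {s : Set Y} (hs : Dense s) {x : Y} (hx : IsOpen {x}) :
    x ∈ s := by
  obtain ⟨y, hys, rfl⟩ := hs.exists_mem_open hx (singleton_nonempty x)
  exact hys

theorem not_separableSpace_of_isOpen_singleton (hM : ∀ x ∉ M, IsOpen {x})
    (hMc : ¬ Mᶜ.Countable) : ¬ SeparableSpace Y := fun ⟨⟨_, hsc, hsd⟩⟩ =>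
  hMc (hsc.mono fun x hx => hsd.mem_of_isOpen_singleton (hM x hx))

theorem isOpen_of_forall_mem_nhds (hM : ∀ x ∉ M, IsOpen {x}) {S : Set Y}
    (hS : ∀ x ∈ S, x ∈ M → S ∈ 𝓝 x) : IsOpen S := by
  refine isOpen_iff_mem_nhds.2 fun x hx => ?_
  by_cases hxM : x ∈ M
  · exact hS x hx hxM
  · exact mem_of_superset ((hM x hxM).mem_nhds rfl) (singleton_subset_iff.2 hx)

theorem isClopen_union_of_subset_union (hM : ∀ x ∉ M, IsOpen {x}) {A U₁ U₂ : Set Y}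
    (hU₁ : IsOpen U₁) (hU₂ : IsOpen U₂) (hU : Disjoint U₁ U₂) (hA : Disjoint A U₂)
    (hcover : M ⊆ U₁ ∪ U₂) : IsClopen (A ∪ U₁) := by
  have hU₂A : Disjoint (A ∪ U₁) U₂ := disjoint_union_left.2 ⟨hA, hU⟩
  refine ⟨⟨isOpen_of_forall_mem_nhds hM fun x hx hxM => ?_⟩,
    isOpen_of_forall_mem_nhds hM fun x hx hxM => ?_⟩
  · have hx₂ : x ∈ U₂ := (hcover hxM).resolve_left fun h => hx (Or.inr h)
    exact mem_of_superset (hU₂.mem_nhds hx₂) hU₂A.subset_compl_left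
  · have hx₁ : x ∈ U₁ := (hcover hxM).resolve_right (hU₂A.notMem_of_mem_left hx)
    exact mem_of_superset (hU₁.mem_nhds hx₁) subset_union_right

theorem exists_isClopen_of_subset_iUnion (hM : ∀ x ∉ M, IsOpen {x}) {A B : Set Y}
    (hAB : Disjoint A B) {V : ℕ → Set Y} (hV : ∀ n, IsClopen (V n))
    (hVAB : ∀ n, Disjoint (V n) A ∨ Disjoint (V n) B) (hcover : M ⊆ ⋃ n, V n) :
    ∃ U, IsClopen U ∧ A ⊆ U ∧ Disjoint U B := by
  set I := {n | Disjoint (V n) B}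
  have hW : ∀ n, IsClopen (disjointed V n) :=
    fun n => Nat.disjointedRec (fun _ i ht => ht.diff (hV i)) (hV n)
  have hWB : ∀ n ∈ I, Disjoint (disjointed V n) B :=
    fun n hn => hn.mono_left (disjointed_subset V n)
  have hWA : ∀ n ∉ I, Disjoint (disjointed V n) A :=
    fun n hn => ((hVAB n).resolve_right hn).mono_left (disjointed_subset V n)
  refine ⟨A ∪ ⋃ n ∈ I, disjointed V n,
    isClopen_union_of_subset_union hM (U₂ := ⋃ n ∈ Iᶜ, disjointed V n)
      (isOpen_biUnion fun n _ => (hW n).isOpen) (isOpen_biUnion fun n _ => (hW n).isOpen)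
      ?_ ?_ ?_, subset_union_left, ?_⟩
  · simp only [disjoint_iUnion₂_left, disjoint_iUnion₂_right]
    exact fun n hn m hm => disjoint_disjointed V (ne_of_mem_of_not_mem hm hn)
  · simp only [disjoint_iUnion₂_right]
    exact fun n hn => (hWA n hn).symm
  · intro x hx
    obtain ⟨n, hn⟩ : ∃ n, x ∈ disjointed V n := by
      rw [← mem_iUnion, iUnion_disjointed]
      exact hcover hx
    by_cases hnI : n ∈ I
    · exact Or.inl (mem_biUnion hnI hn)
    · exact Or.inr (mem_biUnion hnI hn)
  · exact disjoint_union_left.2 ⟨hAB, disjoint_iUnion₂_left.2 hWB⟩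

theorem indLE0_of_countable_clopen_nhds_basis (hM : ∀ x ∉ M, IsOpen {x})
    {𝓑 : Set (Set Y)} (h𝓑c : 𝓑.Countable) (h𝓑 : ∀ V ∈ 𝓑, IsClopen V)
    (hbasis : ∀ x ∈ M, ∀ O ∈ 𝓝 x, ∃ V ∈ 𝓑, x ∈ V ∧ V ⊆ O) :
    IndLE0 ‹TopologicalSpace Y› := by
  intro A B hA hB hAB
  obtain ⟨V, hV⟩ := ((h𝓑c.mono (sep_subset _ _)).insert ∅).exists_eq_range
    (insert_nonempty ∅ {V ∈ 𝓑 | Disjoint V A ∨ Disjoint V B})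
  have hV_mem : ∀ n, V n ∈ insert ∅ {V ∈ 𝓑 | Disjoint V A ∨ Disjoint V B} :=
    fun n => hV ▸ mem_range_self n
  have hcover : M ⊆ ⋃ n, V n := by
    intro x hxM
    have hmiss : ∀ C, IsClosed C → x ∉ C → ∃ W ∈ 𝓑, x ∈ W ∧ Disjoint W C := fun C hC hxC => by
      obtain ⟨W, hW𝓑, hxW, hWC⟩ := hbasis x hxM Cᶜ (hC.isOpen_compl.mem_nhds hxC)
      exact ⟨W, hW𝓑, hxW, subset_compl_iff_disjoint_right.1 hWC⟩
    obtain ⟨W, hW𝓑, hxW, hWAB⟩ : ∃ W ∈ 𝓑, x ∈ W ∧ (Disjoint W A ∨ Disjoint W B) := by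
      by_cases hxA : x ∈ A
      · obtain ⟨W, hW𝓑, hxW, hWB⟩ := hmiss B hB (hAB.notMem_of_mem_left hxA)
        exact ⟨W, hW𝓑, hxW, Or.inr hWB⟩
      · obtain ⟨W, hW𝓑, hxW, hWA⟩ := hmiss A hA hxA
        exact ⟨W, hW𝓑, hxW, Or.inl hWA⟩
    obtain ⟨n, rfl⟩ : W ∈ range V := hV ▸ Or.inr ⟨hW𝓑, hWAB⟩
    exact mem_iUnion_of_mem n hxW
  obtain ⟨U, hU, hAU, hUB⟩ := exists_isClopen_of_subset_iUnion hM hAB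
    (fun n => (hV_mem n).elim (fun h => h ▸ isClopen_empty) fun h => h𝓑 _ h.1)
    (fun n => (hV_mem n).elim (fun h => Or.inl (h ▸ empty_disjoint A)) fun h => h.2) hcover
  exact ⟨U, hU.isOpen, hU.isClosed, hAU, hUB.inter_eq⟩

theorem Set.Countable.hasSeparatingCover {𝓤 : Set (Set Y)} (h𝓤 : 𝓤.Countable) {s t : Set Y}
    (hs : s ⊆ ⋃₀ 𝓤) (h𝓤t : ∀ u ∈ 𝓤, IsOpen u ∧ Disjoint (closure u) t) :
    HasSeparatingCover s t := by
  obtain ⟨u, hu⟩ := (h𝓤.insert ∅).exists_eq_range (insert_nonempty ∅ 𝓤)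
  refine ⟨u, ?_, fun n => ?_⟩
  · rw [← sUnion_range, ← hu, sUnion_insert, empty_union]
    exact hs
  · rcases (hu ▸ mem_range_self n : u n ∈ insert ∅ 𝓤) with h | h
    · simp [h]
    · exact h𝓤t _ h

theorem hasSeparatingCover_of_countable_nonisolated [RegularSpace Y] (hMc : M.Countable)
    (hM : ∀ x ∉ M, IsOpen {x}) {s t : Set Y} (hst : Disjoint (closure s) t)
    (hst' : Disjoint s (closure t)) : HasSeparatingCover s t := by
  have hnhds : ∀ x ∈ s, ∃ u, IsOpen u ∧ x ∈ u ∧ Disjoint (closure u) t := fun x hx => by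
    obtain ⟨c, hc, hcc, hct⟩ := exists_mem_nhds_isClosed_subset
      (isClosed_closure.isOpen_compl.mem_nhds (hst'.notMem_of_mem_left hx))
    refine ⟨interior c, isOpen_interior, mem_interior_iff_mem_nhds.2 hc, ?_⟩
    exact Disjoint.mono_right subset_closure
      (subset_compl_iff_disjoint_right.1 ((closure_minimal interior_subset hcc).trans hct))
  choose! u hu using hnhds
  have h𝓤 : (insert (s \ M) (u '' (s ∩ M))).Countable :=
    ((hMc.mono inter_subset_right).image u).insert (s \ M)
  refine h𝓤.hasSeparatingCover ?_ ?_
  · intro x hx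
    by_cases hxM : x ∈ M
    · exact ⟨u x, Or.inr ⟨x, ⟨hx, hxM⟩, rfl⟩, (hu x hx).2.1⟩
    · exact ⟨s \ M, Or.inl rfl, hx, hxM⟩
  · rintro _ (rfl | ⟨x, hx, rfl⟩)
    · exact ⟨isOpen_of_forall_mem_nhds hM fun x hx hxM => (hx.2 hxM).elim,
        hst.mono_left (closure_mono sdiff_subset)⟩
    · exact ⟨(hu x hx.1).1, (hu x hx.1).2.2⟩

theorem completelyNormalSpace_of_countable_nonisolated [RegularSpace Y] (hMc : M.Countable)
    (hM : ∀ x ∉ M, IsOpen {x}) : CompletelyNormalSpace Y :=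
  ⟨fun _ _ hst hst' => separatedNhds_iff_disjoint.1 <| hasSeparatingCovers_iff_separatedNhds.1
    ⟨hasSeparatingCover_of_countable_nonisolated hMc hM hst hst',
      hasSeparatingCover_of_countable_nonisolated hMc hM hst'.symm hst.symm⟩⟩

end IsolatedPoints

section BingHanner

variable {X : Type*} [t : TopologicalSpace X] {M : Set X}

theorem isOpen_bingHanner_iff {O : Set X} :
    IsOpen[bingHanner t M] O ↔ ∀ x ∈ O, x ∈ M → O ∈ 𝓝 x := by
  constructor
  · rintro ⟨U, K, hU, hK, rfl⟩ x hx hxM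
    exact mem_of_superset (IsOpen.mem_nhds hU (hx.resolve_right fun h => hK h hxM))
      subset_union_left
  · intro h
    refine ⟨interior O, O \ interior O, isOpen_interior,
      fun x hx hxM => hx.2 (mem_interior_iff_mem_nhds.2 (h x hx.1 hxM)), ?_⟩
    exact (union_sdiff_cancel interior_subset).symm

theorem isOpen_bingHanner_of_isOpen {O : Set X} (hO : IsOpen O) : IsOpen[bingHanner t M] O :=
  isOpen_bingHanner_iff.2 fun _ hx _ => hO.mem_nhds hx

theorem isClosed_bingHanner_of_isClosed {C : Set X} (hC : IsClosed C) :
    IsClosed[bingHanner t M] C :=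
  @IsClosed.mk X (bingHanner t M) C (isOpen_bingHanner_of_isOpen hC.isOpen_compl)

theorem isOpen_bingHanner_of_subset_compl {K : Set X} (hK : K ⊆ Mᶜ) :
    IsOpen[bingHanner t M] K :=
  isOpen_bingHanner_iff.2 fun _ hx hxM => (hK hx hxM).elim

theorem isClosed_bingHanner_self : IsClosed[bingHanner t M] M :=
  @IsClosed.mk X (bingHanner t M) M (isOpen_bingHanner_of_subset_compl subset_rfl)

theorem isOpen_bingHanner_singleton {x : X} (hx : x ∉ M) : IsOpen[bingHanner t M] {x} :=
  isOpen_bingHanner_of_subset_compl (singleton_subset_iff.2 hx)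

theorem nhds_bingHanner_of_mem {x : X} (hx : x ∈ M) : @nhds X (bingHanner t M) x = 𝓝 x :=
  le_antisymm (nhds_mono fun _ => isOpen_bingHanner_of_isOpen)
    ((@le_nhds_iff X (bingHanner t M) _ _).2 fun _ hxO hO => isOpen_bingHanner_iff.1 hO _ hxO hx)

theorem isOpen_iff_isOpen_bingHanner_and_compl {O : Set X} :
    IsOpen O ↔ IsOpen[bingHanner t M] O ∧ IsOpen[bingHanner t Mᶜ] O := by
  refine ⟨fun hO => ⟨isOpen_bingHanner_of_isOpen hO, isOpen_bingHanner_of_isOpen hO⟩,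
    fun ⟨h, hc⟩ => isOpen_iff_mem_nhds.2 fun x hx => ?_⟩
  by_cases hxM : x ∈ M
  · exact isOpen_bingHanner_iff.1 h x hx hxM
  · exact isOpen_bingHanner_iff.1 hc x hx hxM

theorem t1Space_bingHanner [T1Space X] : @T1Space X (bingHanner t M) :=
  @T1Space.mk X (bingHanner t M) fun _ => isClosed_bingHanner_of_isClosed isClosed_singleton

theorem secondCountableTopology_bingHanner [SecondCountableTopology X] (hM : Mᶜ.Countable) :
    @SecondCountableTopology X (bingHanner t M) := by
  refine @IsTopologicalBasis.secondCountableTopology X (bingHanner t M)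
    (countableBasis X ∪ (fun x => {x}) '' Mᶜ) ?_ ((countable_countableBasis X).union (hM.image _))
  refine @isTopologicalBasis_of_isOpen_of_nhds X (bingHanner t M) _ ?_ fun x O hxO hO => ?_
  · rintro _ (hV | ⟨x, hx, rfl⟩)
    · exact isOpen_bingHanner_of_isOpen ((isBasis_countableBasis X).isOpen hV)
    · exact isOpen_bingHanner_singleton hx
  by_cases hxM : x ∈ M
  · obtain ⟨V, hV, hxV, hVO⟩ :=
      (isBasis_countableBasis X).mem_nhds_iff.1 (isOpen_bingHanner_iff.1 hO x hxO hxM)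
    exact ⟨V, Or.inl hV, hxV, hVO⟩
  · exact ⟨{x}, Or.inr ⟨x, hxM, rfl⟩, rfl, singleton_subset_iff.2 hxO⟩

theorem not_separableSpace_bingHanner (hM : ¬ Mᶜ.Countable) :
    ¬ @SeparableSpace X (bingHanner t M) :=
  @not_separableSpace_of_isOpen_singleton X (bingHanner t M) M
    (fun _ => isOpen_bingHanner_singleton) hM

theorem IsGδ.of_isGδ_bingHanner {s : Set X} (hs : @IsGδ X (bingHanner t M) s) (hsM : s ⊆ M) :
    IsGδ s := by
  obtain ⟨T, hTo, hTc, rfl⟩ := hs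
  rw [sInter_eq_biInter] at hsM ⊢
  convert IsGδ.biInter_of_isOpen hTc fun O _ => isOpen_interior (s := O) using 1
  refine subset_antisymm (subset_iInter₂ fun O hO x hx => ?_)
    (iInter₂_mono fun O _ => interior_subset)
  exact mem_interior_iff_mem_nhds.2
    (isOpen_bingHanner_iff.1 (hTo O hO) x (mem_iInter₂.1 hx O hO) (hsM hx))

theorem not_metrizableSpace_bingHanner (hM : ¬ IsGδ M) :
    ¬ @MetrizableSpace X (bingHanner t M) := fun _ =>
  hM ((@IsClosed.isGδ X (bingHanner t M) _ M isClosed_bingHanner_self).of_isGδ_bingHanner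
    subset_rfl)

end BingHanner

section Order

variable {X : Type*} [t : TopologicalSpace X] [LinearOrder X] [OrderTopology X] {M : Set X}

theorem isClopen_bingHanner_Ioo {a b : X} (ha : a ∉ M) (hb : b ∉ M) :
    @IsClopen X (bingHanner t M) (Ioo a b) := by
  refine ⟨@IsClosed.mk X (bingHanner t M) _ (isOpen_bingHanner_iff.2 fun x hx hxM => ?_),
    isOpen_bingHanner_of_isOpen isOpen_Ioo⟩
  rcases not_and_or.1 hx with hxa | hxb
  · have hxa' : x < a := (not_lt.1 hxa).lt_of_ne (ne_of_mem_of_not_mem hxM ha)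
    exact mem_of_superset (Iio_mem_nhds hxa') fun y hy hy' => lt_asymm hy hy'.1
  · have hbx : b < x := (not_lt.1 hxb).lt_of_ne (ne_of_mem_of_not_mem hxM hb).symm
    exact mem_of_superset (Ioi_mem_nhds hbx) fun y hy hy' => lt_asymm hy hy'.2

variable [DenselyOrdered X] [NoMinOrder X] [NoMaxOrder X]

theorem Dense.exists_Ioo_subset_of_mem_nhds {D : Set X} (hD : Dense D) {x : X} {O : Set X}
    (hO : O ∈ 𝓝 x) :
    ∃ a ∈ D, ∃ b ∈ D, x ∈ Ioo a b ∧ Ioo a b ⊆ O := by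
  obtain ⟨l, u, ⟨hlx, hxu⟩, hluO⟩ := mem_nhds_iff_exists_Ioo_subset.1 hO
  obtain ⟨a, ha, hla, hax⟩ := hD.exists_between hlx
  obtain ⟨b, hb, hxb, hbu⟩ := hD.exists_between hxu
  exact ⟨a, ha, b, hb, ⟨hax, hxb⟩, (Ioo_subset_Ioo hla.le hbu.le).trans hluO⟩

theorem regularSpace_bingHanner (hM : Dense Mᶜ) : @RegularSpace X (bingHanner t M) := by
  refine @RegularSpace.of_exists_mem_nhds_isClosed_subset X (bingHanner t M) fun x s hs => ?_
  by_cases hxM : x ∈ M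
  · rw [nhds_bingHanner_of_mem hxM] at hs ⊢
    obtain ⟨a, ha, b, hb, hx, hab⟩ := hM.exists_Ioo_subset_of_mem_nhds hs
    exact ⟨Ioo a b, Ioo_mem_nhds hx.1 hx.2, (isClopen_bingHanner_Ioo ha hb).1, hab⟩
  · exact ⟨{x}, @IsOpen.mem_nhds X (bingHanner t M) _ _ (isOpen_bingHanner_singleton hxM) rfl,
      isClosed_bingHanner_of_isClosed isClosed_singleton,
      singleton_subset_iff.2 (@mem_of_mem_nhds X (bingHanner t M) _ _ hs)⟩

theorem t5Space_bingHanner (hM : Dense Mᶜ) (hMc : M.Countable) : @T5Space X (bingHanner t M) :=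
  @T5Space.mk X (bingHanner t M) t1Space_bingHanner
    (@completelyNormalSpace_of_countable_nonisolated X (bingHanner t M) M
      (regularSpace_bingHanner hM) hMc fun _ => isOpen_bingHanner_singleton)

theorem metrizableSpace_bingHanner [SecondCountableTopology X] (hM : Dense Mᶜ)
    (hMc : Mᶜ.Countable) : @MetrizableSpace X (bingHanner t M) :=
  have := t1Space_bingHanner (t := t) (M := M)
  have := regularSpace_bingHanner hM
  have := secondCountableTopology_bingHanner hMc
  @metrizableSpace_of_t3_secondCountable X (bingHanner t M) _ _

theorem indLE0_bingHanner [SecondCountableTopology X] (hM : Dense Mᶜ) :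
    IndLE0 (bingHanner t M) := by
  obtain ⟨D, hDM, hDc, hD⟩ := hM.exists_countable_dense_subset
  refine @indLE0_of_countable_clopen_nhds_basis X (bingHanner t M) M
    (fun _ => isOpen_bingHanner_singleton) (image2 Ioo D D) (hDc.image2 hDc _) ?_ ?_
  · rintro _ ⟨a, ha, b, hb, rfl⟩
    exact isClopen_bingHanner_Ioo (hDM ha) (hDM hb)
  · intro x hxM O hO
    rw [nhds_bingHanner_of_mem hxM] at hO
    obtain ⟨a, ha, b, hb, hx, hab⟩ := hD.exists_Ioo_subset_of_mem_nhds hO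
    exact ⟨Ioo a b, mem_image2_of_mem ha hb, hx, hab⟩

end Order

theorem not_isGδ_range_ratCast : ¬ IsGδ (range ((↑) : ℚ → ℝ)) := fun h => by
  obtain ⟨x, hirr, hrat⟩ :=
    (Dense.inter_of_Gδ IsGδ.setOfPred_irrational h dense_irrational Rat.denseRange_cast).nonempty
  exact hirr hrat

/-- With `Q` the rationals and `P = ℝ \ Q` the irrationals:
`τ_E = τ_E(Q) ∩ τ_E(P)`; `(ℝ, τ_E(P))` is separable metrizable with `Ind ≤ 0`;
`(ℝ, τ_E(Q))` is hereditarily normal with `Ind ≤ 0`, neither metrizable nor separable. -/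
theorem real_line_rational_irrational_extensions (Q P : Set ℝ)
    (hQ : Q = Set.range ((↑) : ℚ → ℝ)) (hP : P = Qᶜ) :
    (∀ O : Set ℝ, IsOpen O ↔
      ((bingHanner (inferInstance : TopologicalSpace ℝ) Q).IsOpen O ∧
       (bingHanner (inferInstance : TopologicalSpace ℝ) P).IsOpen O)) ∧
    (@TopologicalSpace.SeparableSpace ℝ (bingHanner (inferInstance : TopologicalSpace ℝ) P) ∧
      @TopologicalSpace.MetrizableSpace ℝ (bingHanner (inferInstance : TopologicalSpace ℝ) P) ∧
      IndLE0 (bingHanner (inferInstance : TopologicalSpace ℝ) P)) ∧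
    (@T5Space ℝ (bingHanner (inferInstance : TopologicalSpace ℝ) Q) ∧
      IndLE0 (bingHanner (inferInstance : TopologicalSpace ℝ) Q) ∧
      ¬ @TopologicalSpace.MetrizableSpace ℝ (bingHanner (inferInstance : TopologicalSpace ℝ) Q) ∧
      ¬ @TopologicalSpace.SeparableSpace ℝ (bingHanner (inferInstance : TopologicalSpace ℝ) Q)) := by
  subst hQ hP
  have hQc : (range ((↑) : ℚ → ℝ)).Countable := countable_range _
  have hP_uncountable : ¬ (range ((↑) : ℚ → ℝ))ᶜ.Countable := fun h =>
    not_countable_univ (by simpa only [union_compl_self] using hQc.union h)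
  have hQd : Dense (range ((↑) : ℚ → ℝ))ᶜᶜ := by
    rw [compl_compl]
    exact Rat.denseRange_cast
  have hPcompl : (range ((↑) : ℚ → ℝ))ᶜᶜ.Countable := by simpa only [compl_compl] using hQc
  refine ⟨fun O => isOpen_iff_isOpen_bingHanner_and_compl,
    ⟨?_, metrizableSpace_bingHanner hQd hPcompl, indLE0_bingHanner hQd⟩,
    t5Space_bingHanner dense_irrational hQc, indLE0_bingHanner dense_irrational,
    not_metrizableSpace_bingHanner not_isGδ_range_ratCast,
    not_separableSpace_bingHanner hP_uncountable⟩
  exact @SecondCountableTopology.to_separableSpace ℝ (bingHanner _ _)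
    (secondCountableTopology_bingHanner hPcompl)
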